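/- arXiv:1202.1618 — 5 statements merged into one kernel-verified Lean document; each statement's English description precedes it below -/
import Mathlib

section
/- Let H be the n×n zero-diagonal tridiagonal symmetric matrix with super-diagonal entries a₁,…,a_{n-1}, and let N(H) be the symmetric tridiagonal matrix with zero diagonal and super-diagonal entries (-a₁, 0, a₃, 2a₄, …, (n-3)a_{n-1}), i.e., with i-th super-diagonal entry (i-2)aᵢ. Then the commutator K(H) = [H, N(H)] is the skew-symmetric matrix with second super-diagonal entries a₁a₂, a₂a₃, …, a_{n-2}a_{n-1} (and corresponding negated sub-diagonal entries), all other entries zero. -/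
open Matrix

/-- `D₁(a₁,…,a_{n-1})`: the zero-diagonal symmetric tridiagonal matrix with
`(i,i+1)` and `(i+1,i)` entries equal to `a i` (1-indexed). -/
def D1 (n : ℕ) (a : ℕ → ℝ) : Matrix (Fin n) (Fin n) ℝ :=
  Matrix.of fun i j =>
    if (i : ℕ) + 1 = (j : ℕ) then a ((i : ℕ) + 1)
    else if (j : ℕ) + 1 = (i : ℕ) then a ((j : ℕ) + 1) else 0

/-- The skew-symmetric matrix with entries `aᵢa_{i+1}` on the second super-diagonal
and `-aᵢa_{i+1}` on the second sub-diagonal. -/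
def Kmat (n : ℕ) (a : ℕ → ℝ) : Matrix (Fin n) (Fin n) ℝ :=
  Matrix.of fun i j =>
    if (i : ℕ) + 2 = (j : ℕ) then a ((i : ℕ) + 1) * a ((i : ℕ) + 2)
    else if (j : ℕ) + 2 = (i : ℕ) then -(a ((j : ℕ) + 1) * a ((j : ℕ) + 2)) else 0

/-! Both sides of the identity are skew-symmetric (the left one as the commutator of two
symmetric matrices), so it suffices to compare entries above the diagonal. There the
product of two tridiagonal matrices has the single contribution `k = i + 1`, so the `(i, i + 2)`
entry of the commutator is `i aᵢ₊₁aᵢ₊₂ - (i - 1) aᵢ₊₁aᵢ₊₂`. -/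

namespace Matrix

variable {m R : Type*}

theorem transpose_commutator_of_isSymm [Fintype m] [CommRing R] {A B : Matrix m m R}
    (hA : A.IsSymm) (hB : B.IsSymm) : (A * B - B * A)ᵀ = -(A * B - B * A) := by
  rw [transpose_sub, transpose_mul, transpose_mul, hA.eq, hB.eq, neg_sub]

theorem eq_of_transpose_eq_neg_of_apply_lt [LinearOrder m] [AddGroup R] [IsAddTorsionFree R]
    {A B : Matrix m m R} (hA : Aᵀ = -A) (hB : Bᵀ = -B)
    (h : ∀ i j, i < j → A i j = B i j) : A = B := by
  have skew {M : Matrix m m R} (hM : Mᵀ = -M) (i j : m) : M j i = -M i j :=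
    congr_fun (congr_fun hM i) j
  ext i j
  rcases lt_trichotomy i j with hij | rfl | hij
  · exact h i j hij
  · rw [self_eq_neg.mp (skew hA i i), self_eq_neg.mp (skew hB i i)]
  · rw [skew hA, skew hB, h j i hij]

end Matrix

theorem D1_isSymm (n : ℕ) (b : ℕ → ℝ) : (D1 n b).IsSymm :=
  IsSymm.ext fun i j => by
    simp only [D1, of_apply]
    split_ifs <;> first | rfl | omega

theorem Kmat_transpose (n : ℕ) (a : ℕ → ℝ) : (Kmat n a)ᵀ = -Kmat n a := by
  ext i j
  simp only [Kmat, transpose_apply, Matrix.neg_apply, of_apply]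
  split_ifs <;> first | omega | ring

theorem D1_mul_D1_apply_of_lt {n : ℕ} (b c : ℕ → ℝ) {i j : Fin n} (hij : i < j) :
    (D1 n b * D1 n c) i j = if (i : ℕ) + 2 = j then b (i + 1) * c (i + 2) else 0 := by
  have hi : (i : ℕ) + 1 < n := by omega
  rw [mul_apply, Finset.sum_eq_single_of_mem ⟨i + 1, hi⟩ (Finset.mem_univ _)]
  · simp only [D1, of_apply]
    split_ifs <;> first | rfl | omega | simp
  · intro k _ hk
    have hk' : (k : ℕ) ≠ i + 1 := fun h => hk (Fin.ext h)
    simp only [D1, of_apply]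
    split_ifs <;> first | omega | simp

theorem commutator_H_NH_eq_K (n : ℕ) (a : ℕ → ℝ) :
    D1 n a * D1 n (fun i => ((i : ℝ) - 2) * a i)
      - D1 n (fun i => ((i : ℝ) - 2) * a i) * D1 n a = Kmat n a := by
  refine eq_of_transpose_eq_neg_of_apply_lt
    (transpose_commutator_of_isSymm (D1_isSymm n _) (D1_isSymm n _)) (Kmat_transpose n a)
    fun i j hij => ?_
  rw [Matrix.sub_apply, D1_mul_D1_apply_of_lt _ _ hij, D1_mul_D1_apply_of_lt _ _ hij]
  simp only [Kmat, of_apply]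
  split_ifs <;> first | omega | (push_cast; ring)
end

section
/- Let A = D₁(a₁,…,a_{n-1}) be the zero-diagonal symmetric tridiagonal n×n matrix with super-diagonal entries aᵢ, and N(A) = D₁((i-2)aᵢ). Then the double commutator [A,[A,N(A)]] is the zero-diagonal symmetric tridiagonal matrix with super-diagonal entries (-a₁a₂², a₁²a₂ - a₂a₃², …, a_{n-3}²a_{n-2} - a_{n-2}a_{n-1}², a_{n-2}²a_{n-1}), i.e., the i-th super-diagonal entry equals aᵢ(a_{i-1}² - a_{i+1}²) with the conventions a₀ = aₙ = 0. -/
open Matrix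

/-!
Read `D₁` as the restriction to `Fin n` of the tridiagonal kernel `tridiag a` on `ℕ × ℕ`. When
`a 0 = a n = 0`, multiplying a restricted kernel by `D₁(a)` on either side is the restriction of a
two-term kernel, so both commutators can be computed entrywise on `ℕ × ℕ`. Because the weights
`k - 2` of `N(A)` increase by one per step, `[A, N(A)]` is the antisymmetric kernel with
`(i, i + 2)` entry `a (i + 1) * a (i + 2)`. Commuting with `A` once more, the entries at distance
three cancel and the band entries are `a i * (a (i - 1) ^ 2 - a (i + 1) ^ 2)`.
-/

open Finset

variable {R : Type*} [CommRing R]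

def tridiag (a : ℕ → R) : Matrix ℕ ℕ R :=
  of fun i j => if i + 1 = j then a (i + 1) else if j + 1 = i then a (j + 1) else 0

def skewDiag2 (a : ℕ → R) : Matrix ℕ ℕ R :=
  of fun i j => if i + 2 = j then a (i + 1) * a (i + 2)
    else if j + 2 = i then -(a (j + 1) * a (j + 2)) else 0

-- In `ℕ`, `0 - 1 = 0`: at `i = 0` (resp. `j = 0`) the `- 1` term below is weighted by `a 0`,
-- which every lemma using these kernels assumes to vanish.
def tridiagMul (a : ℕ → R) (F : Matrix ℕ ℕ R) : Matrix ℕ ℕ R :=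
  of fun i j => a (i + 1) * F (i + 1) j + a i * F (i - 1) j

def mulTridiag (F : Matrix ℕ ℕ R) (a : ℕ → R) : Matrix ℕ ℕ R :=
  of fun i j => F i (j - 1) * a j + F i (j + 1) * a (j + 1)

theorem D1_eq_submatrix_tridiag (n : ℕ) (a : ℕ → ℝ) :
    D1 n a = (tridiag a).submatrix Fin.val Fin.val :=
  rfl

theorem tridiag_apply_comm (a : ℕ → R) (i j : ℕ) : tridiag a i j = tridiag a j i := by
  simp only [tridiag, of_apply]
  split_ifs <;> first | rfl | omega

theorem tridiag_apply_add_one (a : ℕ → R) (i : ℕ) : tridiag a i (i + 1) = a (i + 1) := by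
  simp [tridiag]

theorem tridiag_apply_sub_one {a : ℕ → R} (h0 : a 0 = 0) (i : ℕ) : tridiag a i (i - 1) = a i := by
  rcases i with _ | i
  · simp [tridiag, h0]
  · rw [Nat.add_sub_cancel, tridiag, of_apply, if_neg (by omega), if_pos rfl]

theorem tridiag_apply_of_ne (a : ℕ → R) {i j : ℕ} (h₁ : i + 1 ≠ j) (h₂ : j + 1 ≠ i) :
    tridiag a i j = 0 := by
  simp [tridiag, h₁, h₂]

theorem sum_range_tridiag_mul {a : ℕ → R} {n i : ℕ} (h0 : a 0 = 0) (hn : a n = 0) (hi : i < n)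
    (G : ℕ → R) :
    ∑ k ∈ range n, tridiag a i k * G k = a (i + 1) * G (i + 1) + a i * G (i - 1) := by
  rw [sum_eq_add (i + 1) (i - 1) (by omega), tridiag_apply_add_one, tridiag_apply_sub_one h0]
  · intro k _ hk
    rw [tridiag_apply_of_ne a (by omega) (by omega), zero_mul]
  · intro h
    rw [tridiag_apply_add_one, show i + 1 = n by simp at h; omega, hn, zero_mul]
  · exact fun h => absurd (mem_range.2 (by omega)) h

theorem sum_range_mul_tridiag {a : ℕ → R} {n j : ℕ} (h0 : a 0 = 0) (hn : a n = 0) (hj : j < n)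
    (G : ℕ → R) :
    ∑ k ∈ range n, G k * tridiag a k j = G (j - 1) * a j + G (j + 1) * a (j + 1) := by
  simp_rw [mul_comm (G _), tridiag_apply_comm a _ j, sum_range_tridiag_mul h0 hn hj]
  ring

theorem submatrix_tridiag_mul {a : ℕ → R} {n : ℕ} (h0 : a 0 = 0) (hn : a n = 0)
    (F : Matrix ℕ ℕ R) :
    ((tridiag a).submatrix Fin.val Fin.val * F.submatrix Fin.val Fin.val :
      Matrix (Fin n) (Fin n) R) = (tridiagMul a F).submatrix Fin.val Fin.val := by
  ext i j
  exact (Fin.sum_univ_eq_sum_range (fun k => tridiag a i k * F k j) n).trans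
    (sum_range_tridiag_mul h0 hn i.isLt _)

theorem submatrix_mul_tridiag {a : ℕ → R} {n : ℕ} (h0 : a 0 = 0) (hn : a n = 0)
    (F : Matrix ℕ ℕ R) :
    (F.submatrix Fin.val Fin.val * (tridiag a).submatrix Fin.val Fin.val :
      Matrix (Fin n) (Fin n) R) = (mulTridiag F a).submatrix Fin.val Fin.val := by
  ext i j
  exact (Fin.sum_univ_eq_sum_range (fun k => F i k * tridiag a k j) n).trans
    (sum_range_mul_tridiag h0 hn j.isLt _)

theorem submatrix_tridiag_commutator {a : ℕ → R} {n : ℕ} (h0 : a 0 = 0) (hn : a n = 0)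
    (F : Matrix ℕ ℕ R) :
    letI A : Matrix (Fin n) (Fin n) R := (tridiag a).submatrix Fin.val Fin.val
    A * F.submatrix Fin.val Fin.val - F.submatrix Fin.val Fin.val * A =
      (tridiagMul a F - mulTridiag F a).submatrix Fin.val Fin.val := by
  rw [submatrix_tridiag_mul h0 hn, submatrix_mul_tridiag h0 hn]
  rfl

theorem tridiagMul_sub_mulTridiag_tridiag (a : ℕ → R) (c : R) (h0 : a 0 = 0) :
    tridiagMul a (tridiag fun k => ((k : R) - c) * a k) -
      mulTridiag (tridiag fun k => ((k : R) - c) * a k) a = skewDiag2 a := by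
  ext i j
  -- An entry only depends on the offset `|i - j|` (every term vanishes beyond the largest one
  -- split off) and on whether the smaller index is `0`, where `- 1` truncates.
  rcases le_total i j with hij | hij <;> obtain ⟨d, rfl⟩ := Nat.exists_eq_add_of_le hij
  case' inl => rcases i with _ | i <;> rcases d with _ | _ | _ | d
  case' inr => rcases j with _ | j <;> rcases d with _ | _ | _ | d
  all_goals
    simp (disch := omega) only [tridiagMul, mulTridiag, tridiag, skewDiag2, Matrix.sub_apply,
      of_apply, if_pos, if_neg, ↓reduceIte, zero_add, Nat.add_sub_cancel, h0]
    push_cast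
    ring

theorem tridiagMul_sub_mulTridiag_skewDiag2 (a : ℕ → R) (h0 : a 0 = 0) :
    tridiagMul a (skewDiag2 a) - mulTridiag (skewDiag2 a) a =
      tridiag fun k => a k * (a (k - 1) ^ 2 - a (k + 1) ^ 2) := by
  ext i j
  rcases le_total i j with hij | hij <;> obtain ⟨d, rfl⟩ := Nat.exists_eq_add_of_le hij
  case' inl => rcases i with _ | i <;> rcases d with _ | _ | _ | _ | d
  case' inr => rcases j with _ | j <;> rcases d with _ | _ | _ | _ | d
  all_goals
    simp (disch := omega) only [tridiagMul, mulTridiag, tridiag, skewDiag2, Matrix.sub_apply,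
      of_apply, if_pos, if_neg, ↓reduceIte, zero_add, Nat.add_sub_cancel, h0]
    ring

theorem double_commutator_tridiagonal (n : ℕ) (a : ℕ → ℝ)
    (h0 : a 0 = 0) (hn : a n = 0) :
    (letI A := D1 n a
     letI NA := D1 n (fun i => ((i : ℝ) - 2) * a i)
     A * (A * NA - NA * A) - (A * NA - NA * A) * A) =
      D1 n (fun i => a i * ((a (i - 1)) ^ 2 - (a (i + 1)) ^ 2)) := by
  simp only [D1_eq_submatrix_tridiag]
  rw [submatrix_tridiag_commutator h0 hn, tridiagMul_sub_mulTridiag_tridiag a 2 h0,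
    submatrix_tridiag_commutator h0 hn, tridiagMul_sub_mulTridiag_skewDiag2 a h0]
end

section
/- Let A₂ be the strictly lower-triangular part of A = D₁(a₁,…,a_{n-1}) and K₁ the strictly upper-triangular matrix with entries a₁a₂,…,a_{n-2}a_{n-1} on its second super-diagonal. Then [A₂,K₁] is the strictly upper-triangular matrix whose first super-diagonal entries are (-a₁a₂², a₁²a₂ - a₂a₃², …, a_{n-3}²a_{n-2} - a_{n-2}a_{n-1}², a_{n-2}²a_{n-1}) and whose other entries are zero. -/
/-! Multiplying by `Low1 n a` shifts rows down (from the left) or columns left (from the right)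
by one, so both products in the commutator are supported on the first super-diagonal, with
entries `aᵢ² aᵢ₊₁` and `aᵢ aᵢ₊₁²` respectively. -/

open Matrix

/-- The strictly upper-triangular matrix with entries `a i` on the first
super-diagonal (1-indexed). -/
def Up1 (n : ℕ) (a : ℕ → ℝ) : Matrix (Fin n) (Fin n) ℝ :=
  Matrix.of fun i j => if (i : ℕ) + 1 = (j : ℕ) then a ((i : ℕ) + 1) else 0

/-- The strictly lower-triangular matrix with entries `a i` on the first
sub-diagonal (1-indexed). -/
def Low1 (n : ℕ) (a : ℕ → ℝ) : Matrix (Fin n) (Fin n) ℝ :=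
  Matrix.of fun i j => if (j : ℕ) + 1 = (i : ℕ) then a ((j : ℕ) + 1) else 0

/-- The strictly upper-triangular matrix with entries `aᵢ a_{i+1}` on the second
super-diagonal (1-indexed). -/
def Up2K (n : ℕ) (a : ℕ → ℝ) : Matrix (Fin n) (Fin n) ℝ :=
  Matrix.of fun i j =>
    if (i : ℕ) + 2 = (j : ℕ) then a ((i : ℕ) + 1) * a ((i : ℕ) + 2) else 0

section
variable {n : ℕ} (a : ℕ → ℝ)

theorem Low1_mul_apply (M : Matrix (Fin n) (Fin n) ℝ) (i j : Fin n) :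
    (Low1 n a * M) i j = if h : 0 < (i : ℕ) then a i * M ⟨i - 1, by omega⟩ j else 0 := by
  rw [mul_apply]
  split_ifs with hi
  · rw [Finset.sum_eq_single ⟨i - 1, by omega⟩]
    · simp [Low1, Nat.sub_add_cancel hi]
    · intro k _ hk
      simp only [Low1, of_apply, ite_mul, zero_mul]
      exact if_neg fun h => hk (Fin.ext (by simp; omega))
    · simp
  · refine Finset.sum_eq_zero fun k _ => ?_
    simp only [Low1, of_apply, ite_mul, zero_mul]
    exact if_neg (by omega)

theorem mul_Low1_apply (M : Matrix (Fin n) (Fin n) ℝ) (i j : Fin n) :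
    (M * Low1 n a) i j = if h : (j : ℕ) + 1 < n then M i ⟨j + 1, h⟩ * a (j + 1) else 0 := by
  rw [mul_apply]
  split_ifs with hj
  · rw [Finset.sum_eq_single ⟨j + 1, hj⟩]
    · simp [Low1]
    · intro k _ hk
      simp only [Low1, of_apply, mul_ite, mul_zero]
      exact if_neg fun h => hk (Fin.ext (by simp; omega))
    · simp
  · refine Finset.sum_eq_zero fun k _ => ?_
    simp only [Low1, of_apply, mul_ite, mul_zero]
    exact if_neg (by omega)

theorem Up1_sub (f g : ℕ → ℝ) : Up1 n f - Up1 n g = Up1 n (f - g) := by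
  ext i j
  simp only [Up1, Matrix.sub_apply, of_apply, Pi.sub_apply]
  split_ifs <;> simp

theorem Low1_mul_Up2K (h0 : a 0 = 0) :
    Low1 n a * Up2K n a = Up1 n (fun m => a (m - 1) ^ 2 * a m) := by
  ext i j
  rw [Low1_mul_apply]
  simp only [Up2K, Up1, of_apply, Nat.add_sub_cancel]
  split_ifs with hi hK hU hU <;> try omega
  · rw [Nat.sub_add_cancel hi, show (i : ℕ) - 1 + 2 = i + 1 by omega]
    ring
  · exact mul_zero _
  · simp [show (i : ℕ) = 0 by omega, h0]
  · rfl

theorem Up2K_mul_Low1 (hn : a n = 0) :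
    Up2K n a * Low1 n a = Up1 n (fun m => a m * a (m + 1) ^ 2) := by
  ext i j
  rw [mul_Low1_apply]
  simp only [Up2K, Up1, of_apply]
  split_ifs with hj hK hU hU <;> try omega
  · rw [← hK]
    ring
  · exact zero_mul _
  · simp [show (i : ℕ) + 1 + 1 = n by omega, hn]
  · rfl

end

theorem lower_upper_commutator (n : ℕ) (a : ℕ → ℝ)
    (h0 : a 0 = 0) (hn : a n = 0) :
    Low1 n a * Up2K n a - Up2K n a * Low1 n a =
      Up1 n (fun i => a i * ((a (i - 1)) ^ 2 - (a (i + 1)) ^ 2)) := by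
  rw [Low1_mul_Up2K a h0, Up2K_mul_Low1 a hn, Up1_sub]
  congr 1
  ext m
  simp only [Pi.sub_apply]
  ring
end

section
/- Let H : [0,∞) → Sym(n,ℝ) be differentiable and satisfy H'(t) = [H(t), [H(t), N(H(t))]] where N is the linear map N(A) = Σ_{i=1}^{n-1}(i-2)(EᵢAE_{i+1} + E_{i+1}AEᵢ). Then the function f(t) = -(1/4)‖H(t) - N(H(t))‖² + (1/4)‖N(H(t))‖² satisfies f'(t) = ‖[H(t), N(H(t))]‖² ≥ 0; in particular f is monotonically non-decreasing along solutions. -/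
/-
`N` acts entrywise: `N(A) = W ⊙ A` for a symmetric weight matrix `W`. Hence the Lyapunov function is
the quadratic form `f(H) = Σᵢⱼ (Wᵢⱼ/2 - 1/4) Hᵢⱼ²`, and for symmetric `H` its derivative along the
flow is `tr(N(H) H') - ½ tr(H H')`. Cyclicity of the trace turns `tr(A [B, C])` into `tr([A, B] C)`,
so `tr(H [H, X]) = 0` and `tr(N [H, [H, N]]) = tr([N, H] [H, N]) = ‖[H, N]‖²`, the last step because
the commutator of two symmetric matrices is skew-symmetric. Monotonicity is then the mean value
theorem.
-/

open Matrix Set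

/-- The linear map `N(A) = Σ_{i=1}^{n-1} (i-2)(EᵢAE_{i+1} + E_{i+1}AEᵢ)` on
`(n+1)×(n+1)` matrices, where `Eᵢ` has a `1` at `(i,i)` and zeros elsewhere. -/
def Nmap (n : ℕ) (A : Matrix (Fin (n + 1)) (Fin (n + 1)) ℝ) :
    Matrix (Fin (n + 1)) (Fin (n + 1)) ℝ :=
  ∑ i : Fin n,
    (((i : ℕ) : ℝ) - 1) •
      (Matrix.single i.castSucc i.castSucc (1 : ℝ) * A *
          Matrix.single i.succ i.succ (1 : ℝ) +
        Matrix.single i.succ i.succ (1 : ℝ) * A *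
          Matrix.single i.castSucc i.castSucc (1 : ℝ))

namespace Matrix

theorem IsSymm.hadamard {m α : Type*} [Mul α] {A B : Matrix m m α} (hA : A.IsSymm)
    (hB : B.IsSymm) : (A ⊙ B).IsSymm := by
  rw [IsSymm, transpose_hadamard, hA.eq, hB.eq]

variable {m R : Type*} [Fintype m] [CommRing R]

theorem trace_mul_lie (A B C : Matrix m m R) : trace (A * ⁅B, C⁆) = trace (⁅A, B⁆ * C) := by
  simp only [Ring.lie_def, mul_sub, sub_mul, trace_sub, Matrix.mul_assoc]
  rw [trace_mul_cycle' A C B]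

theorem trace_mul_lie_self (A X : Matrix m m R) : trace (A * ⁅A, X⁆) = 0 := by
  rw [trace_mul_lie, Ring.lie_def, sub_self, Matrix.zero_mul, trace_zero]

theorem IsSymm.lie_transpose {A B : Matrix m m R} (hA : A.IsSymm) (hB : B.IsSymm) :
    ⁅A, B⁆ᵀ = -⁅A, B⁆ := by
  rw [Matrix.lie_transpose, hA.eq, hB.eq, Ring.lie_def, Ring.lie_def, neg_sub]

theorem IsSymm.trace_mul_lie_lie {A B : Matrix m m R} (hA : A.IsSymm) (hB : B.IsSymm) :
    trace (B * ⁅A, ⁅A, B⁆⁆) = trace (⁅A, B⁆ᵀ * ⁅A, B⁆) := by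
  rw [trace_mul_lie, hA.lie_transpose hB, Ring.lie_def, Ring.lie_def, ← neg_sub, Matrix.neg_mul]

theorem trace_transpose_mul_eq_sum (A B : Matrix m m R) :
    trace (Aᵀ * B) = ∑ i, ∑ j, A i j * B i j := by
  simp only [trace_mul_comm Aᵀ, ← sum_hadamard_eq, hadamard_apply, mul_comm]

theorem trace_transpose_mul_self_nonneg (A : Matrix m m ℝ) : 0 ≤ trace (Aᵀ * A) := by
  rw [trace_transpose_mul_eq_sum]
  exact Finset.sum_nonneg fun i _ => Finset.sum_nonneg fun j _ => mul_self_nonneg (A i j)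

end Matrix

section Lyapunov

variable {m : Type*} [Fintype m]

theorem hasDerivWithinAt_sum_mul_sq (c : Matrix m m ℝ) {H : ℝ → Matrix m m ℝ}
    {H' : Matrix m m ℝ} {s : Set ℝ} {t : ℝ}
    (hH : ∀ i j, HasDerivWithinAt (fun x => H x i j) (H' i j) s t) :
    HasDerivWithinAt (fun x => ∑ i, ∑ j, c i j * H x i j ^ 2)
      (∑ i, ∑ j, c i j * (2 * H t i j * H' i j)) s t := by
  refine HasDerivWithinAt.fun_sum fun i _ => HasDerivWithinAt.fun_sum fun j _ => ?_
  simpa using ((hH i j).pow 2).const_mul (c i j)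

theorem lyapunov_hadamard_eq_sum (W A : Matrix m m ℝ) :
    -(1 / 4) * trace ((A - W ⊙ A)ᵀ * (A - W ⊙ A)) + (1 / 4) * trace ((W ⊙ A)ᵀ * (W ⊙ A))
      = ∑ i, ∑ j, (W i j / 2 - 1 / 4) * A i j ^ 2 := by
  simp only [trace_transpose_mul_eq_sum, Finset.mul_sum, ← Finset.sum_add_distrib,
    Matrix.sub_apply, hadamard_apply]
  refine Finset.sum_congr rfl fun i _ => Finset.sum_congr rfl fun j _ => ?_
  ring

theorem hasDerivWithinAt_lyapunov_hadamard [DecidableEq m] {W : Matrix m m ℝ} (hW : W.IsSymm)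
    {H : ℝ → Matrix m m ℝ} {s : Set ℝ} {t : ℝ} (hH : (H t).IsSymm)
    (hode : ∀ i j, HasDerivWithinAt (fun x => H x i j) (⁅H t, ⁅H t, W ⊙ H t⁆⁆ i j) s t) :
    HasDerivWithinAt
      (fun x => -(1 / 4) * trace ((H x - W ⊙ H x)ᵀ * (H x - W ⊙ H x))
        + (1 / 4) * trace ((W ⊙ H x)ᵀ * (W ⊙ H x)))
      (trace (⁅H t, W ⊙ H t⁆ᵀ * ⁅H t, W ⊙ H t⁆)) s t := by
  have hD : ∑ i, ∑ j, (W i j / 2 - 1 / 4) * (2 * H t i j * ⁅H t, ⁅H t, W ⊙ H t⁆⁆ i j)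
      = trace ((W ⊙ H t)ᵀ * ⁅H t, ⁅H t, W ⊙ H t⁆⁆)
        - 1 / 2 * trace ((H t)ᵀ * ⁅H t, ⁅H t, W ⊙ H t⁆⁆) := by
    simp only [trace_transpose_mul_eq_sum, hadamard_apply, Finset.mul_sum,
      ← Finset.sum_sub_distrib]
    refine Finset.sum_congr rfl fun i _ => Finset.sum_congr rfl fun j _ => ?_
    ring
  rw [(hW.hadamard hH).eq, hH.eq, hH.trace_mul_lie_lie (hW.hadamard hH), trace_mul_lie_self,
    mul_zero, sub_zero] at hD
  simp only [lyapunov_hadamard_eq_sum]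
  exact hD ▸ hasDerivWithinAt_sum_mul_sq _ hode

end Lyapunov

theorem monotoneOn_of_forall_hasDerivWithinAt_nonneg {D : Set ℝ} (hD : Convex ℝ D)
    {f f' : ℝ → ℝ} (hf : ∀ x ∈ D, HasDerivWithinAt f (f' x) D x) (hf' : ∀ x ∈ D, 0 ≤ f' x) :
    MonotoneOn f D :=
  monotoneOn_of_hasDerivWithinAt_nonneg hD (fun x hx => (hf x hx).continuousWithinAt)
    (fun x hx => (hf x (interior_subset hx)).mono interior_subset)
    fun x hx => hf' x (interior_subset hx)

def nmapWeight (n : ℕ) : Matrix (Fin (n + 1)) (Fin (n + 1)) ℝ :=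
  ∑ i : Fin n, (((i : ℕ) : ℝ) - 1) • (single i.castSucc i.succ 1 + single i.succ i.castSucc 1)

theorem nmapWeight_isSymm (n : ℕ) : (nmapWeight n).IsSymm := by
  simp only [nmapWeight, IsSymm, transpose_sum, transpose_smul, transpose_add, transpose_single,
    add_comm]

theorem Nmap_eq_hadamard (n : ℕ) (A : Matrix (Fin (n + 1)) (Fin (n + 1)) ℝ) :
    Nmap n A = nmapWeight n ⊙ A := by
  ext i j
  simp only [Nmap, nmapWeight, single_mul_mul_single, Matrix.sum_apply, hadamard_apply,
    Finset.sum_mul, Matrix.smul_apply, Matrix.add_apply, single_apply, smul_eq_mul, one_mul,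
    mul_one]
  refine Finset.sum_congr rfl fun k _ => ?_
  rw [mul_assoc, add_mul, ite_mul, ite_mul, one_mul, zero_mul]
  congr 2 <;> exact ite_congr rfl (by rintro ⟨rfl, rfl⟩; rfl) fun _ => rfl

theorem lyapunov_function_derivative (n : ℕ)
    (H : ℝ → Matrix (Fin (n + 1)) (Fin (n + 1)) ℝ)
    (hsym : ∀ t ∈ Ici (0 : ℝ), (H t).IsSymm)
    -- `H'(t) = [H(t), [H(t), N(H(t))]]`, entrywise
    (hode : ∀ t ∈ Ici (0 : ℝ), ∀ i j,
      HasDerivWithinAt (fun s => H s i j)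
        ((H t * (H t * Nmap n (H t) - Nmap n (H t) * H t)
          - (H t * Nmap n (H t) - Nmap n (H t) * H t) * H t) i j) (Ici 0) t) :
    (∀ t ∈ Ici (0 : ℝ),
      HasDerivWithinAt
        (fun s => -(1 / 4) * Matrix.trace ((H s - Nmap n (H s))ᵀ * (H s - Nmap n (H s)))
          + (1 / 4) * Matrix.trace ((Nmap n (H s))ᵀ * (Nmap n (H s))))
        (Matrix.trace ((H t * Nmap n (H t) - Nmap n (H t) * H t)ᵀ
          * (H t * Nmap n (H t) - Nmap n (H t) * H t))) (Ici 0) t ∧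
      0 ≤ Matrix.trace ((H t * Nmap n (H t) - Nmap n (H t) * H t)ᵀ
          * (H t * Nmap n (H t) - Nmap n (H t) * H t))) ∧
    MonotoneOn
      (fun s => -(1 / 4) * Matrix.trace ((H s - Nmap n (H s))ᵀ * (H s - Nmap n (H s)))
        + (1 / 4) * Matrix.trace ((Nmap n (H s))ᵀ * (Nmap n (H s))))
      (Ici (0 : ℝ)) := by
  simp only [Nmap_eq_hadamard, ← Ring.lie_def] at hode ⊢
  have hderiv := fun t ht =>
    hasDerivWithinAt_lyapunov_hadamard (nmapWeight_isSymm n) (hsym t ht) (hode t ht)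
  refine ⟨fun t ht => ⟨hderiv t ht, trace_transpose_mul_self_nonneg _⟩, ?_⟩
  exact monotoneOn_of_forall_hasDerivWithinAt_nonneg (convex_Ici 0) hderiv
    fun t _ => trace_transpose_mul_self_nonneg _
end

section
/- Let n be even and let H̃ = D₁(a₁,…,a_{n-1}) be an n×n zero-diagonal symmetric tridiagonal matrix with distinct eigenvalues (a Jacobi matrix). If aᵢa_{i+1} = 0 for all i = 1,…,n-2, then a₂ = a₄ = ⋯ = a_{n-2} = 0 and a₁, a₃, …, a_{n-1} are all nonzero with distinct absolute values; moreover the spectrum of H̃ is {±a₁, ±a₃, …, ±a_{n-1}}. -/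
open Matrix

/-!
If an even-indexed entry `a e` were nonzero, then `a (e - 1) = a (e + 1) = 0`, which cuts the
path `0 — 1 — ⋯ — n-1` (edge `i` joins `i - 1` and `i`) into two pieces with an odd number of
vertices on either side of the edge `e`. Since no two consecutive edges carry nonzero weights, a
parity count finds in each piece a vertex both of whose edges vanish, i.e. a zero column of `D1`.
Two zero columns give a kernel of dimension `2`, impossible for a symmetric matrix with simple
eigenvalues. Once the even entries vanish, `D1` is the direct sum of the blocks
`[[0, a (2k+1)], [a (2k+1), 0]]`, so every eigenvalue is one of the `n` numbers `± a (2k+1)`; as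
there are `n` distinct eigenvalues, these candidates are pairwise distinct and form the spectrum.
-/
open Function Set

theorem Function.Injective.injective_and_range_eq_of_range_subset {ι α : Type*} [Finite ι]
    {f g : ι → α} (hf : Injective f) (h : range f ⊆ range g) :
    Injective g ∧ range f = range g := by
  choose φ hφ using fun i => h ⟨i, rfl⟩
  have hφ_inj : Injective φ := fun i j hij => hf (by rw [← hφ, ← hφ, hij])
  have hφ_surj : Surjective φ := Finite.injective_iff_surjective.mp hφ_inj
  refine ⟨fun i j hij => ?_, ?_⟩
  · obtain ⟨i, rfl⟩ := hφ_surj i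
    obtain ⟨j, rfl⟩ := hφ_surj j
    rw [hφ, hφ] at hij
    rw [hf hij]
  · rw [← hφ_surj.range_comp g]
    exact congrArg range (funext fun i => (hφ i).symm)

theorem Matrix.IsHermitian.eq_of_col_eq_zero {𝕜 ι : Type*} [RCLike 𝕜] [Fintype ι] [DecidableEq ι]
    {A : Matrix ι ι 𝕜} (hA : A.IsHermitian) (hinj : Injective hA.eigenvalues) {j k : ι}
    (hj : ∀ i, A i j = 0) (hk : ∀ i, A i k = 0) : j = k := by
  by_contra hjk
  have hrank : Fintype.card ι - 1 ≤ A.rank := by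
    rw [hA.rank_eq_card_non_zero_eigs, Fintype.card_subtype_compl]
    have : Fintype.card {i // hA.eigenvalues i = 0} ≤ 1 :=
      Fintype.card_le_one_iff.mpr fun x y => Subtype.ext (hinj (x.2.trans y.2.symm))
    omega
  have hli : LinearIndependent 𝕜 ![(Pi.single j 1 : ι → 𝕜), Pi.single k 1] := by
    rw [LinearIndependent.pair_iff]
    intro s t hst
    have hj' := congrFun hst j
    have hk' := congrFun hst k
    simp [hjk, Ne.symm hjk] at hj' hk'
    exact ⟨hj', hk'⟩
  have hker : 2 ≤ Module.finrank 𝕜 (LinearMap.ker A.mulVecLin) := by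
    have hspan : Submodule.span 𝕜 (range ![(Pi.single j 1 : ι → 𝕜), Pi.single k 1]) ≤
        LinearMap.ker A.mulVecLin := by
      rw [Submodule.span_le, range_subset_iff]
      intro t
      fin_cases t <;> ext <;> simp [hj, hk]
    simpa [finrank_span_eq_card hli] using Submodule.finrank_mono hspan
  have := LinearMap.finrank_range_add_finrank_ker A.mulVecLin
  simp only [Module.finrank_fintype_fun_eq_card] at this
  unfold Matrix.rank at hrank
  omega

theorem Matrix.mulVec_apply_eq_of_row {m ι R : Type*} [Fintype ι] [NonUnitalNonAssocSemiring R]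
    {A : Matrix m ι R} {i : m} {k : ι} (hrow : ∀ j, j ≠ k → A i j = 0) (v : ι → R) :
    (A *ᵥ v) i = A i k * v k :=
  Fintype.sum_eq_single k fun j hj => by simp [hrow j hj]

theorem exists_eq_zero_and_succ_eq_zero {M₀ : Type*} [MulZeroClass M₀] [NoZeroDivisors M₀]
    {b : ℕ → M₀} (hb : ∀ i, b i * b (i + 1) = 0) (k : ℕ) {s : ℕ} (hs : b s = 0)
    (hsk : b (s + 2 * k + 1) = 0) : ∃ v, s ≤ v ∧ v ≤ s + 2 * k ∧ b v = 0 ∧ b (v + 1) = 0 := by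
  induction k generalizing s with
  | zero => exact ⟨s, le_rfl, le_rfl, hs, hsk⟩
  | succ k ih =>
    by_cases hs₁ : b (s + 1) = 0
    · exact ⟨s, le_rfl, by omega, hs, hs₁⟩
    · have hs₂ : b (s + 2) = 0 := (mul_eq_zero.mp (hb (s + 1))).resolve_left hs₁
      obtain ⟨v, hsv, hvs, hv⟩ := ih hs₂
        (by rwa [show s + 2 + 2 * k + 1 = s + 2 * (k + 1) + 1 by ring])
      exact ⟨v, by omega, by omega, hv⟩

theorem eq_or_eq_neg_of_mul_swap {K : Type*} [Field K] {x c p q : K} (hp : x * p = c * q)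
    (hq : x * q = c * p) (hpq : p ≠ 0 ∨ q ≠ 0) : x = c ∨ x = -c := by
  have hp' : (x * x - c * c) * p = 0 := by linear_combination x * hp + c * hq
  have hq' : (x * x - c * c) * q = 0 := by linear_combination x * hq + c * hp
  refine mul_self_eq_mul_self_iff.mp (sub_eq_zero.mp ?_)
  rcases hpq with hp0 | hq0
  · exact (mul_eq_zero.mp hp').resolve_right hp0
  · exact (mul_eq_zero.mp hq').resolve_right hq0

section D1

variable {n : ℕ} {a : ℕ → ℝ}

theorem D1_apply_self (i : Fin n) : D1 n a i i = 0 := by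
  simp [D1]

theorem D1_apply_self_succ {m : ℕ} (h : m + 1 < n) :
    D1 n a ⟨m, by omega⟩ ⟨m + 1, h⟩ = a (m + 1) := by
  simp [D1]

theorem D1_apply_succ_self {m : ℕ} (h : m + 1 < n) :
    D1 n a ⟨m + 1, h⟩ ⟨m, by omega⟩ = a (m + 1) := by
  simp [D1]
  omega

theorem D1_apply_eq_zero_of_div_two_ne (heven : ∀ i, 0 < i → i < n → i % 2 = 0 → a i = 0)
    {i j : Fin n} (hij : (i : ℕ) / 2 ≠ j / 2) : D1 n a i j = 0 := by
  have := i.isLt; have := j.isLt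
  simp only [D1, of_apply]
  split_ifs with h1 h2
  · exact heven _ (by omega) (by omega) (by omega)
  · exact heven _ (by omega) (by omega) (by omega)
  · rfl

theorem D1_mulVec_apply_pair (heven : ∀ i, 0 < i → i < n → i % 2 = 0 → a i = 0) {m : ℕ}
    (hm : m % 2 = 0) (h : m + 1 < n) (v : Fin n → ℝ) :
    (D1 n a *ᵥ v) ⟨m, by omega⟩ = a (m + 1) * v ⟨m + 1, h⟩ ∧
      (D1 n a *ᵥ v) ⟨m + 1, h⟩ = a (m + 1) * v ⟨m, by omega⟩ := by
  constructor
  · rw [Matrix.mulVec_apply_eq_of_row (k := ⟨m + 1, h⟩), D1_apply_self_succ]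
    intro j hj
    by_cases hjm : (j : ℕ) = m
    · rw [show j = ⟨m, by omega⟩ from Fin.ext hjm, D1_apply_self]
    · exact D1_apply_eq_zero_of_div_two_ne heven (show m / 2 ≠ (j : ℕ) / 2 by
        simp [Fin.ext_iff] at hj; omega)
  · rw [Matrix.mulVec_apply_eq_of_row (k := ⟨m, by omega⟩), D1_apply_succ_self]
    intro j hj
    by_cases hjm : (j : ℕ) = m + 1
    · rw [show j = ⟨m + 1, h⟩ from Fin.ext hjm, D1_apply_self]
    · exact D1_apply_eq_zero_of_div_two_ne heven (show (m + 1) / 2 ≠ (j : ℕ) / 2 by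
        simp [Fin.ext_iff] at hj; omega)

theorem D1_eigenvalue_eq_pm_odd_entry (hn : Even n)
    (heven : ∀ i, 0 < i → i < n → i % 2 = 0 → a i = 0)
    {v : Fin n → ℝ} (hv : v ≠ 0) {x : ℝ} (hx : D1 n a *ᵥ v = x • v) :
    ∃ i, i % 2 = 1 ∧ i < n ∧ (x = a i ∨ x = -a i) := by
  obtain ⟨k, hk⟩ := Function.ne_iff.mp hv
  have hn2 := Nat.even_iff.mp hn
  have hkn := k.isLt
  set m := (k : ℕ) / 2 * 2 with hm_def
  have hm : m + 1 < n := by omega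
  obtain ⟨hpair₀, hpair₁⟩ := D1_mulVec_apply_pair heven (m := m) (by omega) hm v
  rw [hx] at hpair₀ hpair₁
  refine ⟨m + 1, by omega, hm, eq_or_eq_neg_of_mul_swap hpair₀ hpair₁ ?_⟩
  rcases Nat.mod_two_eq_zero_or_one k with hk2 | hk2
  · left; rwa [show (⟨m, by omega⟩ : Fin n) = k from Fin.ext (show m = (k : ℕ) by omega)]
  · right; rwa [show (⟨m + 1, hm⟩ : Fin n) = k from Fin.ext (show m + 1 = (k : ℕ) by omega)]

theorem D1_even_entry_eq_zero (hn : Even n) (hA : (D1 n a).IsHermitian)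
    (hinj : Injective hA.eigenvalues) (hprod : ∀ i, 1 ≤ i → i ≤ n - 2 → a i * a (i + 1) = 0)
    {e : ℕ} (he₀ : 0 < e) (hen : e < n) (he : e % 2 = 0) : a e = 0 := by
  have hn2 := Nat.even_iff.mp hn
  -- `a` cut down to the edges `1, …, n - 1` of the path, so that `hb` below holds for every `i`
  set b : ℕ → ℝ := fun i => if 0 < i ∧ i < n then a i else 0 with hb_def
  have hb_eq {i : ℕ} (h₀ : 0 < i) (h : i < n) : b i = a i := if_pos ⟨h₀, h⟩
  have hb : ∀ i, b i * b (i + 1) = 0 := by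
    intro i
    by_cases hi : 0 < i ∧ i + 1 < n
    · rw [hb_eq hi.1 (by omega), hb_eq (by omega) hi.2]
      exact hprod i hi.1 (by omega)
    · by_cases h0 : i = 0
      · simp [hb_def, h0]
      · simp [hb_def, show ¬ i + 1 < n by omega]
  have hcol (j : Fin n) (hj : b j = 0) (hj' : b (j + 1) = 0) (i : Fin n) : D1 n a i j = 0 := by
    have := i.isLt
    simp only [D1, of_apply]
    split_ifs with h1 h2
    · rwa [h1, ← hb_eq (by omega) j.isLt]
    · rwa [← hb_eq (by omega) (by omega)]
    · rfl
  by_contra hae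
  have hbe : b e ≠ 0 := by rwa [hb_eq he₀ hen]
  obtain ⟨v₁, -, hv₁, hv₁0, hv₁1⟩ := exists_eq_zero_and_succ_eq_zero hb ((e - 2) / 2)
    (s := 0) (by simp [hb_def]) (by
      rw [show 0 + 2 * ((e - 2) / 2) + 1 = e - 1 by omega]
      simpa [show e - 1 + 1 = e by omega, hbe] using hb (e - 1))
  obtain ⟨v₂, hv₂, hv₂n, hv₂0, hv₂1⟩ := exists_eq_zero_and_succ_eq_zero hb ((n - e - 2) / 2)
    (s := e + 1) (by simpa [hbe] using hb e) (by
      rw [show e + 1 + 2 * ((n - e - 2) / 2) + 1 = n by omega]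
      simp [hb_def])
  have := hA.eq_of_col_eq_zero hinj (j := ⟨v₁, by omega⟩) (k := ⟨v₂, by omega⟩)
    (hcol _ hv₁0 hv₁1) (hcol _ hv₂0 hv₂1)
  simp [Fin.ext_iff] at this
  omega

/-- Index `2k` carries `a (2k+1)` and index `2k+1` carries `-a (2k+1)`: the eigenvalues of the
`2 × 2` blocks of `D1 n a` once its even entries vanish. -/
def signedOddEntry (n : ℕ) (a : ℕ → ℝ) (j : Fin n) : ℝ :=
  if (j : ℕ) % 2 = 0 then a (j + 1) else -a j

theorem signedOddEntry_pred {i : ℕ} (hi : i % 2 = 1) (hin : i < n) :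
    signedOddEntry n a ⟨i - 1, by omega⟩ = a i := by
  simp [signedOddEntry, show (i - 1) % 2 = 0 by omega, show i - 1 + 1 = i by omega]

theorem signedOddEntry_of_odd {i : ℕ} (hi : i % 2 = 1) (hin : i < n) :
    signedOddEntry n a ⟨i, hin⟩ = -a i := by
  simp [signedOddEntry, hi]

theorem range_signedOddEntry (hn : Even n) :
    range (signedOddEntry n a) = {x | ∃ i, i % 2 = 1 ∧ i < n ∧ (x = a i ∨ x = -a i)} := by
  have hn2 := Nat.even_iff.mp hn
  ext x
  constructor
  · rintro ⟨j, rfl⟩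
    have := j.isLt
    by_cases hj : (j : ℕ) % 2 = 0
    · exact ⟨j + 1, by omega, by omega, Or.inl (by simp [signedOddEntry, hj])⟩
    · exact ⟨j, by omega, j.isLt, Or.inr (by simp [signedOddEntry, hj])⟩
  · rintro ⟨i, hi, hin, rfl | rfl⟩
    · exact ⟨_, signedOddEntry_pred hi hin⟩
    · exact ⟨_, signedOddEntry_of_odd hi hin⟩

theorem odd_entry_ne_zero_of_injective_signedOddEntry {i : ℕ}
    (hinj : Injective (signedOddEntry n a))
    (hi : i % 2 = 1) (hin : i < n) : a i ≠ 0 := by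
  intro hai
  have := hinj ((signedOddEntry_pred hi hin).trans
    (by rw [signedOddEntry_of_odd hi hin, hai, neg_zero]))
  simp [Fin.ext_iff] at this
  omega

theorem abs_odd_entry_ne_of_injective_signedOddEntry {i j : ℕ}
    (hinj : Injective (signedOddEntry n a))
    (hi : i % 2 = 1) (hin : i < n) (hj : j % 2 = 1) (hjn : j < n) (hij : i ≠ j) :
    |a i| ≠ |a j| := by
  intro habs
  rcases abs_eq_abs.mp habs with h | h
  · have := hinj ((signedOddEntry_pred hi hin).trans (h.trans (signedOddEntry_pred hj hjn).symm))
    simp [Fin.ext_iff] at this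
    omega
  · have := hinj ((signedOddEntry_pred hi hin).trans (h.trans (signedOddEntry_of_odd hj hjn).symm))
    simp [Fin.ext_iff] at this
    omega

end D1

theorem equilibria_structure_even (n : ℕ) (hn : Even n) (a : ℕ → ℝ)
    (hHerm : (D1 n a).IsHermitian)
    (hdistinct : Function.Injective hHerm.eigenvalues)
    (hprod : ∀ i, 1 ≤ i → i ≤ n - 2 → a i * a (i + 1) = 0) :
    (∀ i, 0 < i → i < n → i % 2 = 0 → a i = 0) ∧
    (∀ i, 0 < i → i < n → i % 2 = 1 → a i ≠ 0) ∧
    (∀ i j, 0 < i → i < n → i % 2 = 1 → 0 < j → j < n → j % 2 = 1 → i ≠ j →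
      |a i| ≠ |a j|) ∧
    spectrum ℝ (D1 n a) =
      {x : ℝ | ∃ i, i % 2 = 1 ∧ i < n ∧ (x = a i ∨ x = -a i)} := by
  have heven : ∀ i, 0 < i → i < n → i % 2 = 0 → a i = 0 := fun i hi₀ hin hi =>
    D1_even_entry_eq_zero hn hHerm hdistinct hprod hi₀ hin hi
  have hsub : range hHerm.eigenvalues ⊆ range (signedOddEntry n a) := by
    rintro _ ⟨j, rfl⟩
    rw [range_signedOddEntry hn]
    exact D1_eigenvalue_eq_pm_odd_entry hn heven
      ((WithLp.ofLp_eq_zero 2).ne.2 (hHerm.eigenvectorBasis.orthonormal.ne_zero j))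
      (hHerm.mulVec_eigenvectorBasis j)
  obtain ⟨hinj, hrange⟩ := hdistinct.injective_and_range_eq_of_range_subset hsub
  refine ⟨heven,
    fun i _ hin hi => odd_entry_ne_zero_of_injective_signedOddEntry hinj hi hin,
    fun i j _ hin hi _ hjn hj hij =>
      abs_odd_entry_ne_of_injective_signedOddEntry hinj hi hin hj hjn hij, ?_⟩
  rw [hHerm.spectrum_real_eq_range_eigenvalues, hrange, range_signedOddEntry hn]
end
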